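/- Let k ≥ 3 be an integer, let v_1 ≥ v_2 ≥ … ≥ v_n > 0, and let B be an integer with 0 ≤ B ≤ n. Suppose π ∈ [0,1]^n satisfies Σ_{j=1}^n π_j ≤ B and is a symmetric equilibrium, i.e., for every q ∈ [0,1]^n with Σ_{j=1}^n q_j ≤ B, Σ_{j=1}^n [q_j·u_1(π_j, v_j) + (1−q_j)·u_0(π_j, v_j)] ≤ Σ_{j=1}^n [π_j·u_1(π_j, v_j) + (1−π_j)·u_0(π_j, v_j)]. Then π_j = m_{v_j}^{-1}(x*) for every j ∈ [n]. That is, the symmetric Nash equilibrium of the Boolean-valued General Lotto game is unique. -/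

import Mathlib

/-!
Writing a player's payoff as `∑ u0 + ∑ q_j * m_{v_j}(π_j)`, an equilibrium `π` maximizes the
linear functional `q ↦ ∑ q_j C_j`, `C_j = m_{v_j}(π_j) > 0`, over the budget set. Shifting mass
from `j` to `i` shows `C_i ≤ C_j` whenever `π_i < 1` and `0 < π_j`, so for
`λ = max {C_i | π_i < 1}` every `π_j` is `m_{v_j}^{-1}(λ)`; moreover the budget is exhausted
unless all `π_j = 1`. The extended inverses are continuous and antitone, so `x*` lies in the
closed set `{x | ∑ m_{v_j}^{-1}(x) ≤ B}` and `x* ≤ λ`: the terms `m_{v_j}^{-1}(x*) ≥ m_{v_j}^{-1}(λ)`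
have sums `≤ B = ∑ m_{v_j}^{-1}(λ)`, hence agree.
-/

/-- Marginal utility `m_v(p)` of competing in a battlefield of value `v` in the
`k`-player Boolean General Lotto game, when each of the other `k−1` players
independently competes with probability `p`. -/
noncomputable def mMarg (k : ℕ) (v p : ℝ) : ℝ :=
  if p = 0 then ((k : ℝ) - 1) * v / k else (v / k) * ((1 - (1 - p) ^ (k - 1)) / p)

/-- Expected share of a value-`v` battlefield from *not* competing. -/
noncomputable def u0 (k : ℕ) (p v : ℝ) : ℝ := (v / k) * (1 - p) ^ (k - 1)

/-- Expected share of a value-`v` battlefield from competing. -/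
noncomputable def u1 (k : ℕ) (p v : ℝ) : ℝ :=
  v * ∑ t ∈ Finset.range k,
    ((k - 1).choose t : ℝ) * p ^ t * (1 - p) ^ (k - 1 - t) / ((t : ℝ) + 1)

open Finset Set

lemma mul_geom_sum_one_sub (p : ℝ) (m : ℕ) :
    p * ∑ i ∈ range m, (1 - p) ^ i = 1 - (1 - p) ^ m := by
  simpa using mul_neg_geom_sum (1 - p) m

lemma natCast_succ_mul_sum_choose_div (m : ℕ) (p : ℝ) :
    ((m : ℝ) + 1) * ∑ t ∈ range (m + 1), (m.choose t : ℝ) * p ^ t * (1 - p) ^ (m - t) / (t + 1)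
      = ∑ i ∈ range (m + 1), (1 - p) ^ i := by
  rcases eq_or_ne p 0 with rfl | hp
  · simp [sum_range_succ']
  apply mul_left_cancel₀ hp
  -- `(m + 1) * C(m, t) = C(m + 1, t + 1) * (t + 1)` turns `p * LHS` into the binomial expansion
  -- of `(p + (1 - p)) ^ (m + 1)` without its `t = 0` term.
  have hbinom := add_pow p (1 - p) (m + 1)
  rw [add_sub_cancel, one_pow, sum_range_succ'] at hbinom
  have hterm : ∀ t ∈ range (m + 1),
      p * (((m : ℝ) + 1) * ((m.choose t : ℝ) * p ^ t * (1 - p) ^ (m - t) / (t + 1)))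
        = p ^ (t + 1) * (1 - p) ^ (m + 1 - (t + 1)) * (m + 1).choose (t + 1) := by
    intro t _
    have hchoose : ((m : ℝ) + 1) * m.choose t = (m + 1).choose (t + 1) * (t + 1) := by
      exact_mod_cast Nat.add_one_mul_choose_eq m t
    rw [Nat.add_sub_add_right]
    field_simp
    linear_combination p ^ (t + 1) * (1 - p) ^ (m - t) * hchoose
  rw [mul_geom_sum_one_sub, mul_sum, mul_sum, sum_congr rfl hterm]
  simp only [pow_zero, Nat.sub_zero, Nat.choose_zero_right, Nat.cast_one, one_mul, mul_one] at hbinom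
  linarith

lemma u1_eq_geom_sum {k : ℕ} (hk : 1 ≤ k) (v p : ℝ) :
    u1 k p v = v / k * ∑ i ∈ range k, (1 - p) ^ i := by
  obtain ⟨m, rfl⟩ := Nat.exists_eq_add_of_le' hk
  rw [← natCast_succ_mul_sum_choose_div m p, u1]
  push_cast
  field_simp

lemma mMarg_eq_geom_sum {k : ℕ} (hk : 1 ≤ k) (v p : ℝ) :
    mMarg k v p = v / k * ∑ i ∈ range (k - 1), (1 - p) ^ i := by
  rw [mMarg]
  split_ifs with hp
  · simp [hp, Nat.cast_sub hk]
    ring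
  · rw [← mul_geom_sum_one_sub, mul_div_cancel_left₀ _ hp]

lemma u1_sub_u0 {k : ℕ} (hk : 1 ≤ k) (v p : ℝ) : u1 k p v - u0 k p v = mMarg k v p := by
  obtain ⟨m, rfl⟩ := Nat.exists_eq_add_of_le' hk
  rw [u1_eq_geom_sum hk, mMarg_eq_geom_sum hk, u0, sum_range_succ, Nat.add_sub_cancel]
  ring

lemma mMarg_zero (k : ℕ) (v : ℝ) : mMarg k v 0 = ((k : ℝ) - 1) * v / k := if_pos rfl

lemma mMarg_one {k : ℕ} (hk : 2 ≤ k) (v : ℝ) : mMarg k v 1 = v / k := by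
  simp [mMarg, zero_pow (by omega : k - 1 ≠ 0)]

lemma continuous_mMarg {k : ℕ} (hk : 1 ≤ k) (v : ℝ) : Continuous (mMarg k v) := by
  rw [funext (mMarg_eq_geom_sum hk v)]
  fun_prop

lemma strictAntiOn_mMarg {k : ℕ} (hk : 3 ≤ k) {v : ℝ} (hv : 0 < v) :
    StrictAntiOn (mMarg k v) (Icc 0 1) := by
  intro a ha b hb hab
  simp only [mMarg_eq_geom_sum (by omega : 1 ≤ k)]
  refine mul_lt_mul_of_pos_left (sum_lt_sum (fun i _ => ?_) ⟨1, mem_range.2 (by omega), ?_⟩)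
    (by positivity)
  · exact pow_le_pow_left₀ (by linarith [hb.2]) (by linarith) i
  · simpa using hab

def budgetSet (ι : Type*) [Fintype ι] (B : ℝ) : Set (ι → ℝ) :=
  {q | (∀ j, q j ∈ Icc (0 : ℝ) 1) ∧ ∑ j, q j ≤ B}

section LinearObjective

variable {ι : Type*} [Fintype ι] {B : ℝ} {C π : ι → ℝ}

lemma sum_mul_nonpos_of_isMaxOn (hmax : IsMaxOn (fun q => ∑ j, q j * C j) (budgetSet ι B) π)
    {d : ι → ℝ} (hd : π + d ∈ budgetSet ι B) : ∑ j, d j * C j ≤ 0 := by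
  have h := isMaxOn_iff.1 hmax _ hd
  simp only [Pi.add_apply, add_mul, sum_add_distrib] at h
  linarith

lemma sum_eq_of_isMaxOn_budgetSet (hπ : π ∈ budgetSet ι B)
    (hmax : IsMaxOn (fun q => ∑ j, q j * C j) (budgetSet ι B) π) {i : ι} (hi : π i < 1)
    (hCi : 0 < C i) : ∑ j, π j = B := by
  classical
  by_contra hne
  set ε := min (1 - π i) (B - ∑ j, π j)
  have hε : 0 < ε := lt_min (by linarith) (by linarith [lt_of_le_of_ne hπ.2 hne])
  have hd : π + Pi.single i ε ∈ budgetSet ι B := by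
    refine ⟨fun l => ?_, ?_⟩
    · rcases eq_or_ne l i with rfl | hl
      · simp only [Pi.add_apply, Pi.single_eq_same]
        exact ⟨by linarith [(hπ.1 l).1], by linarith [min_le_left (1 - π l) (B - ∑ j, π j)]⟩
      · simpa [hl] using hπ.1 l
    · simp only [Pi.add_apply, sum_add_distrib, Fintype.sum_pi_single']
      linarith [min_le_right (1 - π i) (B - ∑ j, π j)]
  have h := sum_mul_nonpos_of_isMaxOn hmax hd
  simp only [← Pi.single_mul_left_apply, Fintype.sum_pi_single'] at h
  nlinarith

lemma le_of_isMaxOn_budgetSet (hπ : π ∈ budgetSet ι B)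
    (hmax : IsMaxOn (fun q => ∑ j, q j * C j) (budgetSet ι B) π) {i j : ι} (hi : π i < 1)
    (hj : 0 < π j) : C i ≤ C j := by
  classical
  rcases eq_or_ne i j with rfl | hij
  · rfl
  set ε := min (1 - π i) (π j)
  have hε : 0 < ε := lt_min (by linarith) hj
  have hd : π + (Pi.single i ε - Pi.single j ε) ∈ budgetSet ι B := by
    refine ⟨fun l => ?_, ?_⟩
    · obtain ⟨h0, h1⟩ := hπ.1 l
      have := min_le_left (1 - π i) (π j)
      have := min_le_right (1 - π i) (π j)
      rcases eq_or_ne l i with rfl | hli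
      · simp only [Pi.add_apply, Pi.sub_apply, Pi.single_eq_same, Pi.single_eq_of_ne hij]
        constructor <;> linarith
      rcases eq_or_ne l j with rfl | hlj
      · simp only [Pi.add_apply, Pi.sub_apply, Pi.single_eq_same, Pi.single_eq_of_ne hli]
        constructor <;> linarith
      · simpa [hli, hlj] using hπ.1 l
    · simpa [sum_add_distrib, sum_sub_distrib] using hπ.2
  have h := sum_mul_nonpos_of_isMaxOn hmax hd
  simp only [Pi.sub_apply, sub_mul, sum_sub_distrib, ← Pi.single_mul_left_apply,
    Fintype.sum_pi_single'] at h
  nlinarith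

lemma exists_threshold_of_isMaxOn_budgetSet (hπ : π ∈ budgetSet ι B)
    (hmax : IsMaxOn (fun q => ∑ j, q j * C j) (budgetSet ι B) π) (h : ∃ i, π i < 1) :
    ∃ t, ∀ j, (0 < π j → t ≤ C j) ∧ (π j < 1 → C j ≤ t) := by
  classical
  obtain ⟨i, hi⟩ := h
  obtain ⟨i₀, hi₀, hmaxC⟩ :=
    exists_max_image (univ.filter fun i => π i < 1) C ⟨i, by simpa using hi⟩
  exact ⟨C i₀, fun j => ⟨le_of_isMaxOn_budgetSet hπ hmax (by simpa using hi₀),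
    fun hj => hmaxC j (by simpa using hj)⟩⟩

end LinearObjective

structure IsExtendedInverse (f g : ℝ → ℝ) : Prop where
  apply_apply : ∀ p ∈ Icc (0 : ℝ) 1, g (f p) = p
  eq_one : ∀ x < f 1, g x = 1
  eq_zero : ∀ x, f 0 < x → g x = 0

namespace IsExtendedInverse

variable {f g : ℝ → ℝ}

lemma eq_of_forall (hg : IsExtendedInverse f g) {x p : ℝ} (hp : p ∈ Icc (0 : ℝ) 1)
    (hpos : 0 < p → x ≤ f p) (hlt : p < 1 → f p ≤ x) : g x = p := by
  rcases hp.1.eq_or_lt with rfl | hp0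
  · rcases (hlt zero_lt_one).eq_or_lt with hx | hx
    · rw [← hx, hg.apply_apply 0 hp]
    · exact hg.eq_zero x hx
  rcases hp.2.eq_or_lt with rfl | hp1
  · rcases (hpos hp0).eq_or_lt with hx | hx
    · rw [hx, hg.apply_apply 1 hp]
    · exact hg.eq_one x hx
  rw [le_antisymm (hpos hp0) (hlt hp1), hg.apply_apply p hp]

lemma mem_Icc (hg : IsExtendedInverse f g) (hfc : ContinuousOn f (Icc 0 1)) (x : ℝ) :
    g x ∈ Icc (0 : ℝ) 1 := by
  rcases lt_or_ge x (f 1) with h1 | h1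
  · simp [hg.eq_one x h1]
  rcases lt_or_ge (f 0) x with h0 | h0
  · simp [hg.eq_zero x h0]
  obtain ⟨p, hp, rfl⟩ := intermediate_value_Icc' zero_le_one hfc ⟨h1, h0⟩
  rwa [hg.apply_apply p hp]

lemma antitone (hg : IsExtendedInverse f g) (hf : StrictAntiOn f (Icc 0 1))
    (hfc : ContinuousOn f (Icc 0 1)) : Antitone g := by
  intro x y hxy
  rcases lt_or_ge x (f 1) with h1 | h1
  · rw [hg.eq_one x h1]
    exact (hg.mem_Icc hfc y).2
  rcases lt_or_ge (f 0) y with h0 | h0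
  · rw [hg.eq_zero y h0]
    exact (hg.mem_Icc hfc x).1
  obtain ⟨p, hp, rfl⟩ := intermediate_value_Icc' zero_le_one hfc ⟨h1, hxy.trans h0⟩
  obtain ⟨q, hq, rfl⟩ := intermediate_value_Icc' zero_le_one hfc ⟨h1.trans hxy, h0⟩
  rwa [hg.apply_apply p hp, hg.apply_apply q hq, ← hf.le_iff_ge hp hq]

lemma continuous (hg : IsExtendedInverse f g) (hf : StrictAntiOn f (Icc 0 1))
    (hfc : ContinuousOn f (Icc 0 1)) : Continuous g := by
  let h : ℝ → Icc (0 : ℝ) 1 := fun x => ⟨g (-x), hg.mem_Icc hfc _⟩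
  have hmono : Monotone h := fun x y hxy => hg.antitone hf hfc (neg_le_neg hxy)
  have hsurj : Function.Surjective h := fun p =>
    ⟨-f p, Subtype.ext (by simp [h, hg.apply_apply p p.2])⟩
  have := (continuous_subtype_val.comp (hmono.continuous_of_surjective hsurj)).comp continuous_neg
  simpa [h, Function.comp_def] using this

end IsExtendedInverse

lemma apply_sInf_eq_of_sum_eq {ι : Type*} [Fintype ι] {g : ι → ℝ → ℝ}
    (hc : ∀ j, Continuous (g j)) (ha : ∀ j, Antitone (g j)) {B t : ℝ} (ht : ∑ j, g j t = B)
    (hbdd : BddBelow {x | ∑ j, g j x ≤ B}) (j : ι) :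
    g j (sInf {x | ∑ j, g j x ≤ B}) = g j t := by
  set S := {x | ∑ j, g j x ≤ B}
  have htS : t ∈ S := ht.le
  have hmem : sInf S ∈ S :=
    (isClosed_le (continuous_finsetSum _ fun j _ => hc j) continuous_const).csInf_mem
      ⟨t, htS⟩ hbdd
  have hle : ∀ j ∈ Finset.univ, g j t ≤ g j (sInf S) := fun j _ => ha j (csInf_le hbdd htS)
  have hsum : ∑ j, g j t = ∑ j, g j (sInf S) := le_antisymm (sum_le_sum hle) (ht ▸ hmem)
  exact ((sum_eq_sum_iff_of_le hle).1 hsum j (Finset.mem_univ j)).symm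

theorem eq_apply_sInf_of_isMaxOn {ι : Type*} [Fintype ι] {f g : ι → ℝ → ℝ}
    (hf : ∀ j, StrictAntiOn (f j) (Icc 0 1)) (hfc : ∀ j, ContinuousOn (f j) (Icc 0 1))
    (hf1 : ∀ j, 0 < f j 1) (hg : ∀ j, IsExtendedInverse (f j) (g j)) {B : ℝ} {π : ι → ℝ}
    (hπ : π ∈ budgetSet ι B)
    (hmax : IsMaxOn (fun q => ∑ j, q j * f j (π j)) (budgetSet ι B) π) (j : ι) :
    π j = g j (sInf {x | ∑ j, g j x ≤ B}) := by
  have hg_nonpos j x (hx : x ≤ 0) : g j x = 1 := (hg j).eq_one x (hx.trans_lt (hf1 j))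
  rcases em (∃ i, π i < 1) with ⟨i, hi⟩ | hall
  · obtain ⟨t, ht⟩ := exists_threshold_of_isMaxOn_budgetSet hπ hmax ⟨i, hi⟩
    have hπt j : π j = g j t := ((hg j).eq_of_forall (hπ.1 j) (ht j).1 (ht j).2).symm
    have hsat : ∑ j, π j = B :=
      sum_eq_of_isMaxOn_budgetSet hπ hmax hi ((hf1 i).trans_le
        ((hf i).antitoneOn (hπ.1 i) ⟨zero_le_one, le_rfl⟩ (hπ.1 i).2))
    have hlt : ∑ j, π j < ∑ _j : ι, (1 : ℝ) :=
      sum_lt_sum (fun j _ => (hπ.1 j).2) ⟨i, Finset.mem_univ i, hi⟩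
    have hbdd : BddBelow {x | ∑ j, g j x ≤ B} := ⟨0, fun x (hx : ∑ j, g j x ≤ B) => by
      by_contra! hx0
      -- for `x < 0` the sum is `card ι > ∑ π = B`
      simp only [hg_nonpos _ x hx0.le] at hx
      linarith⟩
    simp only [hπt] at hsat ⊢
    rw [apply_sInf_eq_of_sum_eq (fun j => (hg j).continuous (hf j) (hfc j))
      (fun j => (hg j).antitone (hf j) (hfc j)) hsat hbdd]
  · have hπ1 j : π j = 1 := le_antisymm (hπ.1 j).2 (not_lt.1 fun h => hall ⟨j, h⟩)
    have hS : {x | ∑ j, g j x ≤ B} = Set.univ := eq_univ_of_forall fun x =>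
      calc ∑ j, g j x ≤ ∑ j, π j := sum_le_sum fun j _ => hπ1 j ▸ ((hg j).mem_Icc (hfc j) x).2
        _ ≤ B := hπ.2
    -- `sInf univ` is the junk value `0`, where every `g j` is still `1`
    rw [hπ1, hS, Real.sInf_of_not_bddBelow not_bddBelow_univ, hg_nonpos j 0 le_rfl]

lemma isMaxOn_of_isEquilibrium {ι : Type*} [Fintype ι] {k : ℕ} (hk : 1 ≤ k) {B : ℝ}
    {v π : ι → ℝ}
    (hπeq : ∀ q : ι → ℝ, (∀ j, q j ∈ Icc (0 : ℝ) 1) → ∑ j, q j ≤ B →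
      ∑ j, (q j * u1 k (π j) (v j) + (1 - q j) * u0 k (π j) (v j)) ≤
        ∑ j, (π j * u1 k (π j) (v j) + (1 - π j) * u0 k (π j) (v j))) :
    IsMaxOn (fun q => ∑ j, q j * mMarg k (v j) (π j)) (budgetSet ι B) π := by
  have hpayoff : ∀ q : ι → ℝ,
      ∑ j, (q j * u1 k (π j) (v j) + (1 - q j) * u0 k (π j) (v j))
        = ∑ j, u0 k (π j) (v j) + ∑ j, q j * mMarg k (v j) (π j) := fun q => by
    rw [← sum_add_distrib]
    refine sum_congr rfl fun j _ => ?_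
    rw [← u1_sub_u0 hk]
    ring
  refine isMaxOn_iff.2 fun q hq => ?_
  have h := hπeq q hq.1 hq.2
  rw [hpayoff, hpayoff] at h
  simpa using h

theorem stmt14_general (k n : ℕ) (hk : 3 ≤ k) (B : ℕ)
    (v : Fin n → ℝ) (hv : ∀ j, 0 < v j)
    -- `minv j` is the extended inverse `m_{v_j}^{-1} : ℝ → [0,1]`:
    (minv : Fin n → ℝ → ℝ)
    (hminv_inv : ∀ j, ∀ p ∈ Set.Icc (0 : ℝ) 1, minv j (mMarg k (v j) p) = p)
    (hminv_lo : ∀ j, ∀ x : ℝ, x < v j / k → minv j x = 1)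
    (hminv_hi : ∀ j, ∀ x : ℝ, ((k : ℝ) - 1) * v j / k < x → minv j x = 0)
    -- `x* = inf {x : Σ_j m_{v_j}^{-1}(x) ≤ B}`:
    (xstar : ℝ) (hxstar : xstar = sInf {x : ℝ | ∑ j, minv j x ≤ (B : ℝ)})
    -- `π` is a symmetric equilibrium:
    (π : Fin n → ℝ) (hπ01 : ∀ j, π j ∈ Set.Icc (0 : ℝ) 1) (hπB : ∑ j, π j ≤ (B : ℝ))
    (hπeq : ∀ q : Fin n → ℝ, (∀ j, q j ∈ Set.Icc (0 : ℝ) 1) → ∑ j, q j ≤ (B : ℝ) →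
      ∑ j, (q j * u1 k (π j) (v j) + (1 - q j) * u0 k (π j) (v j)) ≤
        ∑ j, (π j * u1 k (π j) (v j) + (1 - π j) * u0 k (π j) (v j))) :
    ∀ j, π j = minv j xstar := by
  have hg j : IsExtendedInverse (mMarg k (v j)) (minv j) :=
    ⟨hminv_inv j, by simpa only [mMarg_one (by omega : 2 ≤ k)] using hminv_lo j,
      by simpa only [mMarg_zero] using hminv_hi j⟩
  subst hxstar
  exact eq_apply_sInf_of_isMaxOn (fun j => strictAntiOn_mMarg hk (hv j))
    (fun j => (continuous_mMarg (by omega) (v j)).continuousOn)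
    (fun j => by rw [mMarg_one (by omega)]; exact div_pos (hv j) (by positivity)) hg ⟨hπ01, hπB⟩
    (isMaxOn_of_isEquilibrium (by omega) hπeq)

theorem stmt14 (k n : ℕ) (hk : 3 ≤ k) (B : ℕ) (hB : B ≤ n)
    (v : Fin n → ℝ) (hv : ∀ j, 0 < v j)
    (hsorted : ∀ i j : Fin n, i ≤ j → v j ≤ v i)
    -- `minv j` is the extended inverse `m_{v_j}^{-1} : ℝ → [0,1]`:
    (minv : Fin n → ℝ → ℝ)
    (hminv_inv : ∀ j, ∀ p ∈ Set.Icc (0 : ℝ) 1, minv j (mMarg k (v j) p) = p)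
    (hminv_lo : ∀ j, ∀ x : ℝ, x < v j / k → minv j x = 1)
    (hminv_hi : ∀ j, ∀ x : ℝ, ((k : ℝ) - 1) * v j / k < x → minv j x = 0)
    -- `x* = inf {x : Σ_j m_{v_j}^{-1}(x) ≤ B}`:
    (xstar : ℝ) (hxstar : xstar = sInf {x : ℝ | ∑ j, minv j x ≤ (B : ℝ)})
    -- `π` is a symmetric equilibrium:
    (π : Fin n → ℝ) (hπ01 : ∀ j, π j ∈ Set.Icc (0 : ℝ) 1) (hπB : ∑ j, π j ≤ (B : ℝ))
    (hπeq : ∀ q : Fin n → ℝ, (∀ j, q j ∈ Set.Icc (0 : ℝ) 1) → ∑ j, q j ≤ (B : ℝ) →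
      ∑ j, (q j * u1 k (π j) (v j) + (1 - q j) * u0 k (π j) (v j)) ≤
        ∑ j, (π j * u1 k (π j) (v j) + (1 - π j) * u0 k (π j) (v j))) :
    ∀ j, π j = minv j xstar :=
  stmt14_general k n hk B v hv minv hminv_inv hminv_lo hminv_hi xstar hxstar π hπ01 hπB hπeq
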